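/- arXiv:1809.06835 — 2 statements merged into one kernel-verified Lean document; each statement's English description precedes it below -/
import Mathlib

section
/- If Δ is a (d−1)-dimensional flag pseudomanifold, then f_{i-1}(Δ) ≥ 2^i · C(d, i) for all 0 ≤ i ≤ d, with equality for some i with 1 ≤ i ≤ d if and only if Δ is the boundary complex of the d-cross-polytope (the octahedral (d−1)-sphere). -/
open Finset

variable {V : Type*}

/-- A simplicial complex: a collection of finite subsets containing the empty face
and closed under taking subsets. -/
def IsComplex (K : Set (Finset V)) : Prop :=
  ∅ ∈ K ∧ ∀ s ∈ K, ∀ t ⊆ s, t ∈ K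

/-- A complex is flag if every minimal non-face has cardinality two. -/
def IsFlag (K : Set (Finset V)) : Prop :=
  ∀ s : Finset V, s ∉ K → (∀ t ⊂ s, t ∈ K) → s.card = 2

/-- The induced subcomplex on a set `W` of vertices. -/
def induced (K : Set (Finset V)) (W : Set V) : Set (Finset V) :=
  {s ∈ K | (s : Set V) ⊆ W}

/-- The link of a face `σ`. -/
def link [DecidableEq V] (σ : Finset V) (K : Set (Finset V)) : Set (Finset V) :=
  {τ | τ ∩ σ = ∅ ∧ τ ∪ σ ∈ K}

/-- The vertex set of a complex. -/
def verts (K : Set (Finset V)) : Set V := {v | {v} ∈ K}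

/-- `fnum K i` is the number of faces with exactly `i` vertices, i.e. `f_{i-1}`. -/
noncomputable def fnum (K : Set (Finset V)) (i : ℕ) : ℕ := {s ∈ K | s.card = i}.ncard

/-- `dimIs K d` says the complex is `(d-1)`-dimensional (maximal face cardinality `d`). -/
def dimIs (K : Set (Finset V)) (d : ℕ) : Prop :=
  (∀ s ∈ K, s.card ≤ d) ∧ ∃ s ∈ K, s.card = d

/-- The graph (1-skeleton) of a complex. -/
def graphOf [DecidableEq V] (K : Set (Finset V)) : SimpleGraph V where
  Adj u v := u ≠ v ∧ ({u, v} : Finset V) ∈ K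
  symm := by
    refine ⟨?_⟩
    intro u v h
    exact ⟨h.1.symm, by rw [Finset.pair_comm]; exact h.2⟩
  loopless := ⟨fun v h => h.1 rfl⟩

/-- Connectivity of a complex: its graph, induced on its vertex set, is connected. -/
def ComplexConnected [DecidableEq V] (K : Set (Finset V)) : Prop :=
  ((graphOf K).induce (verts K)).Connected

/-- A `(d-1)`-pseudomanifold: a pure `(d-1)`-dimensional complex in which every
`(d-2)`-face lies in exactly two facets. -/
def IsPseudomanifold [DecidableEq V] (K : Set (Finset V)) (d : ℕ) : Prop :=
  IsComplex K ∧ (∀ s ∈ K, s.card ≤ d) ∧ (∀ s ∈ K, ∃ F ∈ K, s ⊆ F ∧ F.card = d) ∧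
    ∀ r ∈ K, r.card = d - 1 → {F ∈ K | r ⊆ F ∧ F.card = d}.ncard = 2

/-- A normal `(d-1)`-pseudomanifold: connected, and links of faces of dimension
`≤ d-3` are connected. -/
def IsNormalPseudomanifold [DecidableEq V] (K : Set (Finset V)) (d : ℕ) : Prop :=
  IsPseudomanifold K d ∧ ComplexConnected K ∧
    ∀ σ ∈ K, σ.card ≤ d - 2 → ComplexConnected (link σ K)

/-- The boundary complex of the `d`-cross-polytope (the octahedral `(d-1)`-sphere). -/
def octahedron (d : ℕ) : Set (Finset (Fin d × Bool)) :=
  {s | ∀ j : Fin d, ¬(((j, true) ∈ s) ∧ ((j, false) ∈ s))}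

/-- `K` is combinatorially isomorphic to the octahedral `(d-1)`-sphere. -/
def IsOctahedral [DecidableEq V] (K : Set (Finset V)) (d : ℕ) : Prop :=
  ∃ φ : V → Fin d × Bool, Set.InjOn φ (verts K) ∧
    (fun s : Finset V => s.image φ) '' K = octahedron d

/-!
Flagness makes every clique of the graph a face. So if `G` is a facet and `x ∈ G`, the second
facet through `G.erase x` is `insert w (G.erase x)` with `{x, w}` a non-edge: otherwise
`insert w G` would be a clique with `d + 1` vertices. These opposite vertices are distinct and
lie outside `G`, so there are at least `2d` vertices. Vertex links are again flag
pseudomanifolds, one dimension lower, and counting pairs (vertex, `i`-face through it) gives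
`i f_{i-1} ≥ f_0 · 2^{i-1} C(d-1, i-1) ≥ 2d · 2^{i-1} C(d-1, i-1) = i · 2^i C(d, i)` by
induction on `i`. Equality forces `f_0 = 2d`; then each vertex has exactly one non-neighbour, and
`K`, the clique complex of the complement of a perfect matching, is the octahedral sphere.
-/

section Complex

variable {K : Set (Finset V)} {s t : Finset V} {v : V}

theorem IsComplex.mono (hC : IsComplex K) (hs : s ∈ K) (hts : t ⊆ s) : t ∈ K :=
  hC.2 s hs t hts

theorem IsComplex.singleton_mem (hC : IsComplex K) (hs : s ∈ K) (hv : v ∈ s) : {v} ∈ K :=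
  hC.mono hs (singleton_subset_iff.2 hv)

theorem verts_finite (hfin : K.Finite) : (verts K).Finite :=
  hfin.preimage singleton_injective.injOn

theorem fnum_zero (hC : IsComplex K) : fnum K 0 = 1 := by
  have : {s ∈ K | s.card = 0} = {∅} := by
    ext s
    simp only [Set.mem_ofPred_eq, Set.mem_singleton_iff, card_eq_zero]
    exact ⟨And.right, fun h => ⟨h ▸ hC.1, h⟩⟩
  rw [fnum, this, Set.ncard_singleton]

theorem fnum_one (K : Set (Finset V)) : fnum K 1 = (verts K).ncard := by
  have : {s ∈ K | s.card = 1} = (fun v => {v}) '' verts K := by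
    ext s
    simp only [Set.mem_ofPred_eq, card_eq_one, Set.mem_image, verts]
    constructor
    · rintro ⟨hs, v, rfl⟩
      exact ⟨v, hs, rfl⟩
    · rintro ⟨v, hv, rfl⟩
      exact ⟨hv, v, rfl⟩
  rw [fnum, this, Set.ncard_image_of_injective _ singleton_injective]

end Complex

section Link

variable [DecidableEq V] {K : Set (Finset V)} {s : Finset V} {u v w : V}

theorem IsComplex.pair_mem (hC : IsComplex K) (hs : s ∈ K) (hu : u ∈ s) (hw : w ∈ s) :
    {u, w} ∈ K :=
  hC.mono hs (insert_subset hu (singleton_subset_iff.2 hw))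

def IsCliqueComplex (K : Set (Finset V)) : Prop :=
  ∀ s : Finset V, (∀ u ∈ s, ∀ w ∈ s, ({u, w} : Finset V) ∈ K) → s ∈ K

theorem IsFlag.isCliqueComplex (hF : IsFlag K) : IsCliqueComplex K := by
  intro s
  induction s using Finset.strongInduction with
  | H s ih =>
    intro hpairs
    by_contra hs
    have hproper : ∀ t ⊂ s, t ∈ K := fun t ht =>
      ih t ht fun u hu w hw => hpairs u (ht.1 hu) w (ht.1 hw)
    obtain ⟨u, w, -, rfl⟩ := card_eq_two.1 (hF _ hs hproper)
    exact hs (hpairs u (by simp) w (by simp))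

theorem mem_link_singleton {τ : Finset V} :
    τ ∈ link {v} K ↔ v ∉ τ ∧ insert v τ ∈ K := by
  simp [link, Finset.eq_empty_iff_forall_notMem]

theorem IsComplex.link_singleton (hC : IsComplex K) (hv : {v} ∈ K) : IsComplex (link {v} K) := by
  refine ⟨mem_link_singleton.2 ⟨notMem_empty v, hv⟩, fun s hs t hts => ?_⟩
  rw [mem_link_singleton] at hs ⊢
  exact ⟨fun h => hs.1 (hts h), hC.mono hs.2 (insert_subset_insert v hts)⟩

theorem IsCliqueComplex.link_singleton (hcl : IsCliqueComplex K) (hC : IsComplex K)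
    (hv : {v} ∈ K) :
    IsCliqueComplex (link {v} K) := by
  intro s hs
  have hlink : ∀ u ∈ s, ∀ w ∈ s, v ∉ ({u, w} : Finset V) ∧ insert v {u, w} ∈ K :=
    fun u hu w hw => mem_link_singleton.1 (hs u hu w hw)
  have hvs : v ∉ s := fun hvs => (hlink v hvs v hvs).1 (mem_insert_self v _)
  refine mem_link_singleton.2 ⟨hvs, hcl _ fun u hu w hw => ?_⟩
  rcases mem_insert.1 hu with rfl | hus <;> rcases mem_insert.1 hw with rfl | hws
  · simpa using hv
  · exact hC.mono (hlink w hws w hws).2 (by simp)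
  · exact hC.mono (hlink u hus u hus).2 (by simp [pair_comm])
  · exact hC.mono (hlink u hus w hws).2 (subset_insert v _)

theorem link_finite (hfin : K.Finite) (v : V) : (link {v} K).Finite :=
  (hfin.image (·.erase v)).subset fun τ hτ =>
    ⟨insert v τ, (mem_link_singleton.1 hτ).2, erase_insert (mem_link_singleton.1 hτ).1⟩

theorem ncard_link_singleton (P : Finset V → Prop) (hP : ∀ s, P s → v ∈ s) :
    {τ ∈ link {v} K | P (insert v τ)}.ncard = {s ∈ K | P s}.ncard := by
  refine Set.ncard_congr (fun τ _ => insert v τ) ?_ ?_ ?_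
  · rintro τ ⟨hτ, hPτ⟩
    exact ⟨(mem_link_singleton.1 hτ).2, hPτ⟩
  · rintro τ σ ⟨hτ, -⟩ ⟨hσ, -⟩ h
    rw [← erase_insert (mem_link_singleton.1 hτ).1,
      ← erase_insert (mem_link_singleton.1 hσ).1]
    exact congrArg (·.erase v) h
  · rintro s ⟨hs, hPs⟩
    have hvs := hP s hPs
    refine ⟨s.erase v, ⟨mem_link_singleton.2 ⟨notMem_erase v s, ?_⟩, ?_⟩,
      insert_erase hvs⟩ <;> rwa [insert_erase hvs]

theorem fnum_link_singleton (i : ℕ) :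
    fnum (link {v} K) i = {s ∈ K | v ∈ s ∧ s.card = i + 1}.ncard := by
  rw [fnum, ← ncard_link_singleton _ fun _ => And.left]
  congr 1
  ext τ
  simp only [Set.mem_ofPred_eq, mem_insert_self, true_and]
  refine and_congr_right fun hτ => ?_
  rw [card_insert_of_notMem (mem_link_singleton.1 hτ).1]
  omega

end Link

section Pseudomanifold

variable [DecidableEq V] {K : Set (Finset V)} {d : ℕ} {G : Finset V} {u v w x : V}

theorem IsPseudomanifold.pos (hP : IsPseudomanifold K d) : 0 < d := by
  by_contra! hd
  obtain rfl : d = 0 := by omega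
  have hle := Set.ncard_le_ncard
    (show {F ∈ K | ∅ ⊆ F ∧ F.card = 0} ⊆ {∅} from fun F hF => card_eq_zero.1 hF.2.2)
  rw [hP.2.2.2 ∅ hP.1.1 rfl, Set.ncard_singleton] at hle
  omega

theorem IsPseudomanifold.link_singleton (hP : IsPseudomanifold K d) (hv : {v} ∈ K)
    (hd : 2 ≤ d) :
    IsPseudomanifold (link {v} K) (d - 1) := by
  obtain ⟨hC, hdim, hpure, hridge⟩ := hP
  refine ⟨hC.link_singleton hv, fun s hs => ?_, fun s hs => ?_, fun r hr hrc => ?_⟩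
  · obtain ⟨hvs, hs⟩ := mem_link_singleton.1 hs
    have := hdim _ hs
    rw [card_insert_of_notMem hvs] at this
    omega
  · obtain ⟨F, hF, hsF, hFc⟩ := hpure _ (mem_link_singleton.1 hs).2
    have hvF : v ∈ F := hsF (mem_insert_self v s)
    refine ⟨F.erase v, mem_link_singleton.2 ⟨notMem_erase v F, by rwa [insert_erase hvF]⟩,
      fun x hx => mem_erase.2 ⟨?_, hsF (mem_insert_of_mem hx)⟩,
      by rw [card_erase_of_mem hvF, hFc]⟩
    rintro rfl
    exact (mem_link_singleton.1 hs).1 hx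
  · obtain ⟨hvr, hr⟩ := mem_link_singleton.1 hr
    have hrc' : (insert v r).card = d - 1 := by rw [card_insert_of_notMem hvr]; omega
    rw [← hridge _ hr hrc', ← ncard_link_singleton (fun F => insert v r ⊆ F ∧ F.card = d)
      fun F hF => hF.1 (mem_insert_self v r)]
    congr 1
    ext τ
    simp only [Set.mem_ofPred_eq]
    refine and_congr_right fun hτ => ?_
    rw [insert_subset_insert_iff hvr, card_insert_of_notMem (mem_link_singleton.1 hτ).1]
    exact and_congr_right fun _ => by omega

theorem IsPseudomanifold.exists_other_facet (hP : IsPseudomanifold K d) (hG : G ∈ K)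
    (hGc : G.card = d) (hx : x ∈ G) : ∃ w ∉ G, insert w (G.erase x) ∈ K := by
  have hrc : (G.erase x).card = d - 1 := by rw [card_erase_of_mem hx, hGc]
  have htwo := hP.2.2.2 _ (hP.1.mono hG (erase_subset x G)) hrc
  obtain ⟨H, ⟨hH, hrH, hHc⟩, hHG⟩ := Set.exists_ne_of_one_lt_ncard
    (s := {F ∈ K | G.erase x ⊆ F ∧ F.card = d}) (by omega) G
  obtain ⟨w, hwH, hwG⟩ : ∃ w ∈ H, w ∉ G := by
    by_contra! hHsub
    exact hHG (eq_of_subset_of_card_le hHsub (by rw [hGc, hHc]))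
  exact ⟨w, hwG, hP.1.mono hH (insert_subset hwH hrH)⟩

/-- Were `x` and `w` adjacent, `insert w G` would be a clique, hence a face with `d + 1`
vertices. -/
theorem IsCliqueComplex.pair_not_mem (hcl : IsCliqueComplex K) (hC : IsComplex K)
    (hdim : ∀ s ∈ K, s.card ≤ d) (hG : G ∈ K) (hGc : G.card = d) (hw : w ∉ G)
    (hH : insert w (G.erase x) ∈ K) : {x, w} ∉ K := by
  intro hxw
  have hclique : insert w G ∈ K := by
    have hHmem : ∀ c ∈ G, c ≠ x → c ∈ insert w (G.erase x) :=
      fun c hc hcx => mem_insert_of_mem (mem_erase.2 ⟨hcx, hc⟩)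
    have hwx : ∀ c ∈ G, ({w, c} : Finset V) ∈ K := fun c hc => by
      by_cases hcx : c = x
      · rwa [hcx, pair_comm]
      · exact hC.pair_mem hH (mem_insert_self w _) (hHmem c hc hcx)
    refine hcl _ fun a ha b hb => ?_
    rcases mem_insert.1 ha with rfl | haG <;> rcases mem_insert.1 hb with rfl | hbG
    · exact hC.pair_mem hH (mem_insert_self _ _) (mem_insert_self _ _)
    · exact hwx b hbG
    · exact pair_comm a b ▸ hwx a haG
    · exact hC.pair_mem hG haG hbG
  have := hdim _ hclique
  rw [card_insert_of_notMem hw, hGc] at this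
  omega

/-- In a flag pseudomanifold, `o x` is the vertex completing `G.erase x` to the second facet
through it. -/
structure IsOppositeMap (K : Set (Finset V)) (G : Finset V) (o : V → V) : Prop where
  injOn : Set.InjOn o G
  notMem : ∀ x ∈ G, o x ∉ G
  pair_mem_iff : ∀ x ∈ G, ∀ y ∈ G, ({y, o x} : Finset V) ∈ K ↔ y ≠ x
  mem_verts : ∀ x ∈ G, o x ∈ verts K

theorem IsPseudomanifold.exists_isOppositeMap (hP : IsPseudomanifold K d)
    (hcl : IsCliqueComplex K) (hG : G ∈ K) (hGc : G.card = d) : ∃ o, IsOppositeMap K G o := by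
  choose! o hoG hoK using fun x (hx : x ∈ G) => hP.exists_other_facet hG hGc hx
  have hadj : ∀ x ∈ G, ∀ y ∈ G, ({y, o x} : Finset V) ∈ K ↔ y ≠ x := by
    refine fun x hx y hy => ⟨?_, fun hyx => ?_⟩
    · rintro hyo rfl
      exact hcl.pair_not_mem hP.1 hP.2.1 hG hGc (hoG y hy) (hoK y hy) hyo
    · exact hP.1.pair_mem (hoK x hx) (mem_insert_of_mem (mem_erase.2 ⟨hyx, hy⟩))
        (mem_insert_self _ _)
  refine ⟨o, fun x hx y hy hxy => ?_, hoG, hadj, fun x hx =>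
    hP.1.singleton_mem (hoK x hx) (mem_insert_self _ _)⟩
  by_contra hne
  exact (hadj x hx x hx).1 (hxy ▸ (hadj y hy x hx).2 hne) rfl

theorem IsOppositeMap.card_union_image {o : V → V} (ho : IsOppositeMap K G o) :
    (G ∪ G.image o).card = 2 * G.card := by
  have hdisj : Disjoint G (G.image o) := disjoint_right.2 fun z hz => by
    obtain ⟨x, hx, rfl⟩ := mem_image.1 hz
    exact ho.notMem x hx
  rw [card_union_of_disjoint hdisj, card_image_of_injOn ho.injOn, two_mul]

theorem IsOppositeMap.union_image_subset_verts {o : V → V} (ho : IsOppositeMap K G o)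
    (hC : IsComplex K) (hG : G ∈ K) : ↑(G ∪ G.image o) ⊆ verts K := fun z hz => by
  rcases mem_union.1 hz with hzG | hz
  · exact hC.singleton_mem hG hzG
  · obtain ⟨x, hx, rfl⟩ := mem_image.1 hz
    exact ho.mem_verts x hx

theorem IsPseudomanifold.two_mul_le_ncard_verts (hfin : K.Finite) (hP : IsPseudomanifold K d)
    (hcl : IsCliqueComplex K) : 2 * d ≤ (verts K).ncard := by
  obtain ⟨G, hG, -, hGc⟩ := hP.2.2.1 ∅ hP.1.1
  obtain ⟨o, ho⟩ := hP.exists_isOppositeMap hcl hG hGc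
  rw [← hGc, ← ho.card_union_image, ← Set.ncard_coe_finset]
  exact Set.ncard_le_ncard (ho.union_image_subset_verts hP.1 hG) (verts_finite hfin)

theorem IsPseudomanifold.verts_eq_union_image (hfin : K.Finite) (hP : IsPseudomanifold K d)
    (hV : (verts K).ncard ≤ 2 * d) (hG : G ∈ K) (hGc : G.card = d) {o : V → V}
    (ho : IsOppositeMap K G o) : verts K = ↑(G ∪ G.image o) :=
  (Set.eq_of_subset_of_ncard_le (ho.union_image_subset_verts hP.1 hG)
    (by rwa [Set.ncard_coe_finset, ho.card_union_image, hGc]) (verts_finite hfin)).symm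

/-- With only `2 * d` vertices, every vertex outside a facet `G ∋ u` is opposite to some
`x ∈ G`, and it is a neighbour of `u` unless `x = u`. -/
theorem IsPseudomanifold.eq_of_pair_not_mem (hfin : K.Finite) (hP : IsPseudomanifold K d)
    (hcl : IsCliqueComplex K) (hV : (verts K).ncard ≤ 2 * d) (hu : u ∈ verts K)
    {w w' : V} (hw : w ∈ verts K) (hw' : w' ∈ verts K) (huw : {u, w} ∉ K)
    (huw' : {u, w'} ∉ K) : w = w' := by
  obtain ⟨G, hG, huG, hGc⟩ := hP.2.2.1 {u} hu
  rw [singleton_subset_iff] at huG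
  obtain ⟨o, ho⟩ := hP.exists_isOppositeMap hcl hG hGc
  have hopp : ∀ z ∈ verts K, {u, z} ∉ K → z = o u := by
    intro z hz huz
    rw [hP.verts_eq_union_image hfin hV hG hGc ho, coe_union, coe_image] at hz
    rcases hz with hzG | ⟨x, hx, rfl⟩
    · exact absurd (hP.1.pair_mem hG huG hzG) huz
    · by_contra hne
      exact huz ((ho.pair_mem_iff x hx u huG).2 fun hux => hne (hux ▸ rfl))
  rw [hopp w hw huw, hopp w' hw' huw']

end Pseudomanifold

section Counting

variable [DecidableEq V] {K : Set (Finset V)} {d i : ℕ}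

theorem sum_fnum_link (hfin : K.Finite) (hC : IsComplex K) (i : ℕ) :
    ∑ v ∈ (verts_finite hfin).toFinset, fnum (link {v} K) i = (i + 1) * fnum K (i + 1) := by
  set T := (hfin.subset (Set.sep_subset K fun s => s.card = i + 1)).toFinset
  have habove : ∀ v, fnum (link {v} K) i = (T.bipartiteAbove (fun v s => v ∈ s) v).card := by
    intro v
    rw [fnum_link_singleton, bipartiteAbove, ← Set.ncard_coe_finset, coe_filter]
    congr 1
    ext s
    simp [T, and_comm, and_left_comm]
  have hbelow : ∀ s ∈ T,
      ((verts_finite hfin).toFinset.bipartiteBelow (fun v s => v ∈ s) s).card = i + 1 := by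
    intro s hs
    rw [Set.Finite.mem_toFinset] at hs
    rw [bipartiteBelow, ← hs.2]
    congr 1
    ext v
    simpa [verts] using fun hv => hC.singleton_mem hs.1 hv
  rw [sum_congr rfl fun v _ => habove v, sum_card_bipartiteAbove_eq_sum_card_bipartiteBelow,
    sum_congr rfl hbelow, sum_const, smul_eq_mul, fnum, Set.ncard_eq_toFinset_card _
      (hfin.subset (Set.sep_subset K fun s => s.card = i + 1)), mul_comm]

theorem ncard_verts_mul_le (hfin : K.Finite) (hC : IsComplex K) {b : ℕ}
    (hlink : ∀ v ∈ verts K, b ≤ fnum (link {v} K) i) :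
    (verts K).ncard * b ≤ (i + 1) * fnum K (i + 1) := by
  rw [← sum_fnum_link hfin hC, Set.ncard_eq_toFinset_card _ (verts_finite hfin)]
  simpa using card_nsmul_le_sum _ _ _ fun v hv => hlink v ((verts_finite hfin).mem_toFinset.1 hv)

theorem succ_mul_two_pow_mul_choose (d i : ℕ) :
    (i + 1) * (2 ^ (i + 1) * d.choose (i + 1)) = 2 * d * (2 ^ i * (d - 1).choose i) := by
  rcases d with _ | d
  · simp
  · calc (i + 1) * (2 ^ (i + 1) * (d + 1).choose (i + 1))
        = 2 * 2 ^ i * ((d + 1).choose (i + 1) * (i + 1)) := by ring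
      _ = 2 * 2 ^ i * ((d + 1) * d.choose i) := by rw [Nat.add_one_mul_choose_eq]
      _ = 2 * (d + 1) * (2 ^ i * (d + 1 - 1).choose i) := by rw [Nat.add_one_sub_one]; ring

theorem IsPseudomanifold.two_pow_mul_choose_le_fnum (hfin : K.Finite)
    (hP : IsPseudomanifold K d) (hcl : IsCliqueComplex K) (hid : i ≤ d) :
    2 ^ i * d.choose i ≤ fnum K i := by
  induction i generalizing K d with
  | zero => simp [fnum_zero hP.1]
  | succ i ih =>
    have hlink : ∀ v ∈ verts K, 2 ^ i * (d - 1).choose i ≤ fnum (link {v} K) i := by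
      intro v hv
      rcases Nat.eq_zero_or_pos i with rfl | hi
      · simp [fnum_zero (hP.1.link_singleton hv)]
      · exact ih (link_finite hfin v) (hP.link_singleton hv (by omega))
          (hcl.link_singleton hP.1 hv) (by omega)
    refine Nat.le_of_mul_le_mul_left ?_ i.succ_pos
    calc (i + 1) * (2 ^ (i + 1) * d.choose (i + 1))
        = 2 * d * (2 ^ i * (d - 1).choose i) := succ_mul_two_pow_mul_choose d i
      _ ≤ (verts K).ncard * (2 ^ i * (d - 1).choose i) :=
        Nat.mul_le_mul_right _ (hP.two_mul_le_ncard_verts hfin hcl)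
      _ ≤ (i + 1) * fnum K (i + 1) := ncard_verts_mul_le hfin hP.1 hlink

theorem IsPseudomanifold.two_pow_mul_choose_le_fnum_link (hfin : K.Finite)
    (hP : IsPseudomanifold K d) (hcl : IsCliqueComplex K) {v : V} (hv : v ∈ verts K)
    (hid : i + 1 ≤ d) : 2 ^ i * (d - 1).choose i ≤ fnum (link {v} K) i := by
  rcases Nat.eq_zero_or_pos i with rfl | hi
  · simp [fnum_zero (hP.1.link_singleton hv)]
  · exact (hP.link_singleton hv (by omega)).two_pow_mul_choose_le_fnum (link_finite hfin v)
      (hcl.link_singleton hP.1 hv) (by omega)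

/-- The inductive step passes through `2 * d ≤ (verts K).ncard`, so equality in the bound forces
equality there. -/
theorem IsPseudomanifold.ncard_verts_le_of_fnum_eq (hfin : K.Finite) (hP : IsPseudomanifold K d)
    (hcl : IsCliqueComplex K) (hi : 1 ≤ i) (hid : i ≤ d) (heq : fnum K i = 2 ^ i * d.choose i) :
    (verts K).ncard ≤ 2 * d := by
  obtain ⟨j, rfl⟩ : ∃ j, i = j + 1 := ⟨i - 1, by omega⟩
  have hpos : 0 < 2 ^ j * (d - 1).choose j := by
    have := Nat.choose_pos (show j ≤ d - 1 by omega)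
    positivity
  refine Nat.le_of_mul_le_mul_right ?_ hpos
  calc (verts K).ncard * (2 ^ j * (d - 1).choose j) ≤ (j + 1) * fnum K (j + 1) :=
        ncard_verts_mul_le hfin hP.1 fun v hv => hP.two_pow_mul_choose_le_fnum_link hfin hcl hv hid
    _ = 2 * d * (2 ^ j * (d - 1).choose j) := by rw [heq, succ_mul_two_pow_mul_choose]

end Counting

section Octahedron

variable [DecidableEq V] {K : Set (Finset V)} {d : ℕ}

theorem isOctahedral_of_pair_mem_iff (hC : IsComplex K) (hcl : IsCliqueComplex K) (hd : 0 < d)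
    {ψ : Fin d × Bool → V} (hψ : ψ.Injective) (hverts : verts K ⊆ Set.range ψ)
    (hpair : ∀ x y, ({ψ x, ψ y} : Finset V) ∈ K ↔ (x.1 = y.1 → x = y)) :
    IsOctahedral K d := by
  have : Nonempty (Fin d × Bool) := ⟨(⟨0, hd⟩, true)⟩
  have hφψ : ∀ x, Function.invFun ψ (ψ x) = x := Function.leftInverse_invFun hψ
  have hψφ : ∀ u ∈ verts K, ψ (Function.invFun ψ u) = u :=
    fun u hu => Function.invFun_eq (hverts hu)
  refine ⟨Function.invFun ψ, fun u hu w hw h => by rw [← hψφ u hu, ← hψφ w hw, h], ?_⟩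
  ext t
  constructor
  · rintro ⟨s, hs, rfl⟩ j ⟨htrue, hfalse⟩
    obtain ⟨u, hu, hut⟩ := mem_image.1 htrue
    obtain ⟨w, hw, hwf⟩ := mem_image.1 hfalse
    have huw := hC.pair_mem hs hu hw
    rw [← hψφ u (hC.singleton_mem hs hu), ← hψφ w (hC.singleton_mem hs hw), hpair, hut, hwf]
      at huw
    simp at huw
  · intro ht
    refine ⟨t.image ψ, hcl _ ?_, by simp [image_image, Function.comp_def, hφψ]⟩
    simp only [mem_image]
    rintro _ ⟨⟨j, a⟩, hx, rfl⟩ _ ⟨⟨k, b⟩, hy, rfl⟩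
    rw [hpair]
    rintro (rfl : j = k)
    cases a <;> cases b
    · rfl
    · exact absurd ⟨hy, hx⟩ (ht j)
    · exact absurd ⟨hx, hy⟩ (ht j)
    · rfl

theorem IsPseudomanifold.pair_mem_iff_of_partner (hfin : K.Finite) (hP : IsPseudomanifold K d)
    (hcl : IsCliqueComplex K) (hV : (verts K).ncard ≤ 2 * d) {ψ : Fin d × Bool → V}
    (hψ : ψ.Injective) (hψverts : ∀ x, ψ x ∈ verts K)
    (hpartner : ∀ x, ({ψ x, ψ (x.1, !x.2)} : Finset V) ∉ K) (x y : Fin d × Bool) :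
    ({ψ x, ψ y} : Finset V) ∈ K ↔ (x.1 = y.1 → x = y) := by
  constructor
  · obtain ⟨j, a⟩ := x
    obtain ⟨k, b⟩ := y
    rintro hxy (rfl : j = k)
    by_contra hne
    obtain rfl : b = !a := by cases a <;> cases b <;> simp_all
    exact hpartner (j, a) hxy
  · intro h
    by_contra hxy
    have hy := hψ (hP.eq_of_pair_not_mem hfin hcl hV (hψverts x) (hψverts y) (hψverts _) hxy
      (hpartner x))
    simpa using congrArg Prod.snd ((h (by rw [hy])).trans hy)

theorem IsPseudomanifold.isOctahedral (hfin : K.Finite) (hP : IsPseudomanifold K d)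
    (hcl : IsCliqueComplex K) (hV : (verts K).ncard ≤ 2 * d) : IsOctahedral K d := by
  obtain ⟨F, hF, -, hFc⟩ := hP.2.2.1 ∅ hP.1.1
  obtain ⟨o, ho⟩ := hP.exists_isOppositeMap hcl hF hFc
  let e : Fin d ≃ F := (F.equivFin.trans (finCongr hFc)).symm
  let ψ : Fin d × Bool → V := fun x => bif x.2 then e x.1 else o (e x.1)
  have hψ : ψ.Injective := by
    rintro ⟨j, a⟩ ⟨k, b⟩ h
    have hj := (e j).2
    have hk := (e k).2
    cases a <;> cases b <;> simp only [ψ, cond_true, cond_false] at h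
    · rw [e.injective (Subtype.ext (ho.injOn hj hk h))]
    · exact absurd (h ▸ hk) (ho.notMem _ hj)
    · exact absurd (h ▸ hj) (ho.notMem _ hk)
    · rw [e.injective (Subtype.ext h)]
  have hverts := hP.verts_eq_union_image hfin hV hF hFc ho
  have hψverts : ∀ x, ψ x ∈ verts K := by
    rintro ⟨j, a⟩
    rw [hverts, coe_union, coe_image]
    cases a
    · exact Or.inr ⟨e j, (e j).2, rfl⟩
    · exact Or.inl (e j).2
  have hrange : verts K ⊆ Set.range ψ := by
    rw [hverts, coe_union, coe_image]
    rintro u (hu | ⟨x, hx, rfl⟩)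
    · exact ⟨(e.symm ⟨u, hu⟩, true), by simp [ψ]⟩
    · exact ⟨(e.symm ⟨x, hx⟩, false), by simp [ψ]⟩
  have hpartner : ∀ x, ({ψ x, ψ (x.1, !x.2)} : Finset V) ∉ K := by
    rintro ⟨j, a⟩
    have := (ho.pair_mem_iff _ (e j).2 _ (e j).2).not.2 (not_not.2 rfl)
    cases a
    · simpa [ψ, pair_comm] using this
    · simpa [ψ] using this
  exact isOctahedral_of_pair_mem_iff hP.1 hcl hP.pos hψ hrange
    (hP.pair_mem_iff_of_partner hfin hcl hV hψ hψverts hpartner)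

theorem IsOctahedral.ncard_verts (hoct : IsOctahedral K d) (hC : IsComplex K) :
    (verts K).ncard = 2 * d := by
  obtain ⟨φ, hinj, himg⟩ := hoct
  have hsurj : φ '' verts K = Set.univ := by
    refine Set.eq_univ_of_forall fun p => ?_
    have hp : {p} ∈ octahedron d := fun j ⟨htrue, hfalse⟩ => by
      rw [mem_singleton] at htrue hfalse
      simp [← htrue] at hfalse
    rw [← himg] at hp
    obtain ⟨s, hs, hsp⟩ := hp
    obtain ⟨u, hu, rfl⟩ := mem_image.1 (hsp ▸ mem_singleton_self p)
    exact ⟨u, hC.singleton_mem hs hu, rfl⟩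
  rw [← hinj.ncard_image, hsurj, Set.ncard_univ, Nat.card_eq_fintype_card, Fintype.card_prod,
    Fintype.card_fin, Fintype.card_bool, mul_comm]

end Octahedron

/-- a flag `(d-1)`-pseudomanifold satisfies `f_{i-1} ≥ 2^i C(d,i)` for all
`0 ≤ i ≤ d`, with equality for some `1 ≤ i ≤ d` iff it is the octahedral sphere. -/
theorem flag_pseudomanifold_lower_bound [DecidableEq V] (K : Set (Finset V)) (d : ℕ)
    (hfin : K.Finite) (hP : IsPseudomanifold K d) (hF : IsFlag K) :
    (∀ i ≤ d, 2 ^ i * d.choose i ≤ fnum K i) ∧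
    ((∃ i, 1 ≤ i ∧ i ≤ d ∧ fnum K i = 2 ^ i * d.choose i) ↔ IsOctahedral K d) := by
  have hcl := hF.isCliqueComplex
  refine ⟨fun i hi => hP.two_pow_mul_choose_le_fnum hfin hcl hi,
    fun ⟨i, hi, hid, heq⟩ =>
      hP.isOctahedral hfin hcl (hP.ncard_verts_le_of_fnum_eq hfin hcl hi hid heq),
    fun hoct => ⟨1, le_rfl, hP.pos, ?_⟩⟩
  rw [fnum_one, hoct.ncard_verts hP.1, pow_one, Nat.choose_one_right]
end

section
/- If Δ is a flag homology (d−1)-sphere with d ≥ 1, then Δ has at least 2d vertices, i.e., f₀(Δ) ≥ 2d; equivalently γ₁(Δ) = f₀(Δ) − 2d ≥ 0. -/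
open Finset

attribute [local instance] Classical.propDecidable

variable {V : Type*}

variable [LinearOrder V]

/-- The group of simplicial `ℤ`-chains spanned by the faces with exactly `n` vertices
(so chain degree `n` corresponds to topological dimension `n-1`; degree `0` is spanned
by the empty face, giving the augmented/reduced chain complex). -/
abbrev Chains (K : Set (Finset V)) (n : ℕ) : Type _ :=
  {s : Finset V // s ∈ K ∧ s.card = n} →₀ ℤ

/-- The simplicial boundary map, with signs given by the position of a vertex in the
sorted list of vertices of a face. -/
noncomputable def bd (K : Set (Finset V)) (n : ℕ) :
    Chains K (n + 1) →ₗ[ℤ] Chains K n :=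
  Finsupp.lsum ℤ fun s => LinearMap.toSpanSingleton ℤ (Chains K n)
    (∑ v ∈ s.1.attach,
      ((-1 : ℤ) ^ ({w ∈ s.1 | w < v.1} : Finset V).card) •
        if h : s.1.erase v.1 ∈ K then
          Finsupp.single ⟨s.1.erase v.1, h, by
            have hc := s.2.2
            rw [Finset.card_erase_of_mem v.2, hc]; omega⟩ (1 : ℤ)
        else 0)

/-- Reduced cycles: everything in degree `0`, kernels of the boundary above. -/
noncomputable def cycles (K : Set (Finset V)) : (n : ℕ) → Submodule ℤ (Chains K n)
  | 0 => ⊤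
  | n + 1 => LinearMap.ker (bd K n)

/-- Reduced simplicial homology in chain degree `n` (topological degree `n-1`):
cycles modulo boundaries. -/
abbrev RH (K : Set (Finset V)) (n : ℕ) :=
  cycles K n ⧸ Submodule.comap (cycles K n).subtype (LinearMap.range (bd K n))

/-- `K` has the reduced homology of a sphere of topological dimension `n-1`:
`ℤ` in chain degree `n` and zero elsewhere. -/
def HasSphereHomology (K : Set (Finset V)) (n : ℕ) : Prop :=
  Nonempty (RH K n ≃ₗ[ℤ] ℤ) ∧ ∀ m : ℕ, m ≠ n → Subsingleton (RH K m)

/-- A homology `(d-1)`-sphere: a complex of dimension `≤ d-1` in which the link of every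
face `σ` (including the empty face) has the reduced homology of a sphere of dimension
`d - 1 - |σ|`. -/
def IsHomologySphere (K : Set (Finset V)) (d : ℕ) : Prop :=
  IsComplex K ∧ (∀ s ∈ K, s.card ≤ d) ∧
    ∀ σ ∈ K, HasSphereHomology (link σ K) (d - σ.card)

/-! A facet `σ` (a face with `d` vertices) exists because the top homology is nonzero. For each
`v ∈ σ` the link of the ridge `σ \ {v}` is a homology `0`-sphere, so it has a vertex `w v ≠ v`.
Flagness forbids the edge `{v, w v}`: otherwise `σ ∪ {w v}` would be a clique, hence a face
with `d + 1` vertices. As `w v'` is adjacent to every `v ∈ σ` other than `v'`, this also makes `w`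
injective, so `σ ∪ w(σ)` has `2d` vertices. -/

section Complex

omit [LinearOrder V]

variable {K : Set (Finset V)}

theorem link_empty [DecidableEq V] : link ∅ K = K := by
  ext τ; simp [link]

theorem singleton_mem_link [DecidableEq V] {τ : Finset V} {u : V} :
    {u} ∈ link τ K ↔ u ∉ τ ∧ insert u τ ∈ K := by
  simp [link, ← disjoint_iff_inter_eq_empty]

theorem IsFlag.mem_of_forall_pair_mem (hF : IsFlag K) (s : Finset V)
    (hs : ∀ a ∈ s, ∀ b ∈ s, a ≠ b → {a, b} ∈ K) : s ∈ K := by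
  induction s using Finset.strongInduction with
  | _ s ih =>
    by_contra hsK
    have hproper : ∀ t ⊂ s, t ∈ K := fun t hts =>
      ih t hts fun a ha b hb => hs a (hts.subset ha) b (hts.subset hb)
    obtain ⟨a, b, hab, rfl⟩ := card_eq_two.mp (hF s hsK hproper)
    exact hsK (hs a (by simp) b (by simp) hab)

theorem IsFlag.insert_mem (hK : IsComplex K) (hF : IsFlag K) {s : Finset V} (hs : s ∈ K)
    {w : V} (hw : ∀ u ∈ s, {w, u} ∈ K) : insert w s ∈ K := by
  refine hF.mem_of_forall_pair_mem _ fun a ha b hb hab => ?_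
  rcases mem_insert.mp ha with rfl | has <;> rcases mem_insert.mp hb with rfl | hbs
  · exact absurd rfl hab
  · exact hw b hbs
  · exact pair_comm a b ▸ hw a has
  · exact hK.2 s hs _ (insert_subset has (singleton_subset_iff.mpr hbs))

theorem IsFlag.pair_notMem_of_insert_erase_mem (hK : IsComplex K) (hF : IsFlag K) {d : ℕ}
    (hdim : ∀ s ∈ K, s.card ≤ d) {σ : Finset V} (hσ : σ ∈ K) (hcard : σ.card = d) {v w : V}
    (hv : v ∈ σ) (hw : w ∉ σ) (hwσ : insert w (σ.erase v) ∈ K) : {v, w} ∉ K := by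
  intro hvw
  have hmem : insert w σ ∈ K := hF.insert_mem hK hσ fun u hu => by
    obtain rfl | huv := eq_or_ne u v
    · rwa [pair_comm]
    · exact hK.2 _ hwσ _
        (insert_subset_insert w (singleton_subset_iff.mpr (mem_erase.mpr ⟨huv, hu⟩)))
  have := hdim _ hmem
  rw [card_insert_of_notMem hw] at this
  omega

theorem injOn_of_insert_erase_mem (hK : IsComplex K) {σ : Finset V} {w : V → V}
    (hwσ : ∀ v ∈ σ, insert (w v) (σ.erase v) ∈ K) (hvw : ∀ v ∈ σ, {v, w v} ∉ K) :
    Set.InjOn w σ := by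
  intro v hv v' hv' heq
  by_contra hne
  refine hvw v hv (hK.2 _ (hwσ v' hv') _ ?_)
  rw [pair_comm, heq]
  exact insert_subset_insert _ (singleton_subset_iff.mpr (mem_erase.mpr ⟨hne, hv⟩))

theorem card_le_fnum_one (hK : K.Finite) {T : Finset V} (hT : ∀ u ∈ T, {u} ∈ K) :
    T.card ≤ fnum K 1 := by
  rw [fnum, ← card_image_of_injective T singleton_injective, ← Set.ncard_coe_finset]
  refine Set.ncard_le_ncard (fun s hs => ?_) (hK.subset fun s hs => hs.1)
  obtain ⟨u, hu, rfl⟩ := by simpa using hs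
  exact ⟨hT u hu, card_singleton u⟩

end Complex

section Homology

variable {L : Set (Finset V)} {n : ℕ}

theorem HasSphereHomology.not_subsingleton_cycles (hL : HasSphereHomology L n) :
    ¬ Subsingleton (cycles L n) := by
  intro h
  obtain ⟨e⟩ := hL.1
  exact zero_ne_one (e.symm.injective (Subsingleton.elim _ _))

theorem HasSphereHomology.exists_mem_card_eq (hL : HasSphereHomology L n) :
    ∃ s ∈ L, s.card = n := by
  by_contra! h
  have : IsEmpty {s : Finset V // s ∈ L ∧ s.card = n} := ⟨fun s => h s.1 s.2.1 s.2.2⟩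
  exact hL.not_subsingleton_cycles inferInstance

theorem bd_zero_single_apply_empty (h0 : ∅ ∈ L) (x : {s : Finset V // s ∈ L ∧ s.card = 1})
    (c : ℤ) : bd L 0 (Finsupp.single x c) ⟨∅, h0, card_empty⟩ = c := by
  obtain ⟨s, hs, hc⟩ := x
  obtain ⟨a, rfl⟩ := card_eq_one.mp hc
  have hattach : ({a} : Finset V).attach = {⟨a, mem_singleton_self a⟩} :=
    eq_singleton_iff_unique_mem.mpr ⟨mem_attach _ _, fun x _ => Subtype.ext (mem_singleton.mp x.2)⟩
  simp [bd, hattach, h0, filter_singleton]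

theorem subsingleton_cycles_one (h0 : ∅ ∈ L) (hv : ∀ a b : V, {a} ∈ L → {b} ∈ L → a = b) :
    Subsingleton (cycles L 1) := by
  have hidx : Subsingleton {s : Finset V // s ∈ L ∧ s.card = 1} := by
    refine ⟨fun ⟨s, hs, hsc⟩ ⟨t, ht, htc⟩ => ?_⟩
    obtain ⟨a, rfl⟩ := card_eq_one.mp hsc
    obtain ⟨b, rfl⟩ := card_eq_one.mp htc
    simp [hv a b hs ht]
  have hker : cycles L 1 = ⊥ := LinearMap.ker_eq_bot'.mpr fun f hf => by
    ext y
    have hfy : f = Finsupp.single y (f y) :=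
      Finsupp.ext fun z => by rw [Subsingleton.elim z y, Finsupp.single_eq_same]
    have := bd_zero_single_apply_empty h0 y (f y)
    rw [← hfy, hf] at this
    simpa using this.symm
  rw [hker]
  infer_instance

theorem HasSphereHomology.exists_singleton_mem_ne (hL : HasSphereHomology L 1) (h0 : ∅ ∈ L)
    (v : V) : ∃ u ≠ v, {u} ∈ L := by
  by_contra! h
  have hv : ∀ u, {u} ∈ L → u = v := fun u hu => by_contra fun huv => h u huv hu
  exact hL.not_subsingleton_cycles
    (subsingleton_cycles_one h0 fun a b ha hb => (hv a ha).trans (hv b hb).symm)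

end Homology

namespace IsHomologySphere

variable {K : Set (Finset V)} {d : ℕ}

theorem hasSphereHomology (hS : IsHomologySphere K d) : HasSphereHomology K d := by
  simpa [link_empty] using hS.2.2 ∅ hS.1.1

theorem exists_ne_insert_mem (hS : IsHomologySphere K d) {τ : Finset V} (hτ : τ ∈ K)
    (hcard : τ.card + 1 = d) (v : V) : ∃ u ≠ v, u ∉ τ ∧ insert u τ ∈ K := by
  have hL : HasSphereHomology (link τ K) 1 := by
    simpa [← hcard] using hS.2.2 τ hτ
  obtain ⟨u, huv, hu⟩ := hL.exists_singleton_mem_ne (by simpa [link] using hτ) v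
  exact ⟨u, huv, singleton_mem_link.mp hu⟩

theorem exists_insert_erase_mem (hS : IsHomologySphere K d) {σ : Finset V} (hσ : σ ∈ K)
    (hcard : σ.card = d) {v : V} (hv : v ∈ σ) : ∃ w ∉ σ, insert w (σ.erase v) ∈ K := by
  obtain ⟨w, hwv, hw, hmem⟩ := hS.exists_ne_insert_mem (hS.1.2 σ hσ _ (erase_subset v σ))
    (by rw [card_erase_add_one hv, hcard]) v
  exact ⟨w, fun h => hw (mem_erase.mpr ⟨hwv, h⟩), hmem⟩

end IsHomologySphere

theorem flag_homology_sphere_vertex_bound_general (K : Set (Finset V)) (d : ℕ)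
    (hfin : K.Finite) (hS : IsHomologySphere K d) (hF : IsFlag K) :
    2 * d ≤ fnum K 1 := by
  obtain ⟨σ, hσ, hσd⟩ := hS.hasSphereHomology.exists_mem_card_eq
  choose! w hwσ hw using fun v (hv : v ∈ σ) => hS.exists_insert_erase_mem hσ hσd hv
  have hvw : ∀ v ∈ σ, {v, w v} ∉ K := fun v hv =>
    hF.pair_notMem_of_insert_erase_mem hS.1 hS.2.1 hσ hσd hv (hwσ v hv) (hw v hv)
  have hdisj : Disjoint σ (σ.image w) := by
    simpa [disjoint_right] using hwσ
  have hvertex : ∀ u ∈ σ ∪ σ.image w, {u} ∈ K := by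
    simp only [mem_union, mem_image]
    rintro u (hu | ⟨v, hv, rfl⟩)
    · exact hS.1.2 σ hσ _ (singleton_subset_iff.mpr hu)
    · exact hS.1.2 _ (hw v hv) _ (singleton_subset_iff.mpr (mem_insert_self _ _))
  calc 2 * d = (σ ∪ σ.image w).card := by
        rw [card_union_of_disjoint hdisj,
          card_image_of_injOn (injOn_of_insert_erase_mem hS.1 hw hvw), hσd, two_mul]
    _ ≤ fnum K 1 := card_le_fnum_one hfin hvertex

/-- a flag homology `(d-1)`-sphere with `d ≥ 1` has at least `2d` vertices,
i.e. `γ₁ = f₀ - 2d ≥ 0`. -/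
theorem flag_homology_sphere_vertex_bound (K : Set (Finset V)) (d : ℕ)
    (hd : 1 ≤ d) (hfin : K.Finite) (hS : IsHomologySphere K d) (hF : IsFlag K) :
    2 * d ≤ fnum K 1 :=
  flag_homology_sphere_vertex_bound_general K d hfin hS hF
end
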